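/- arXiv:2203.02628 — 4 statements merged into one kernel-verified Lean document; each statement's English description precedes it below -/
import Mathlib

section
/- Consider the MDP with states S = {s₁, s₂}, actions A = {a₁, a₂}, deterministic transitions where action a₁ leads to s₁ with probability 1 and action a₂ leads to s₂ with probability 1 regardless of the current state, rewards R(s₁,a₁) = 1, R(s₁,a₂) = 2, R(s₂,a₁) = 2, R(s₂,a₂) = 4, and discount factor γ ∈ (0,1). Let H be its Bellman optimality operator, let the single feature vector be Φ = (φ(s₁,a₁), φ(s₁,a₂), φ(s₂,a₁), φ(s₂,a₂)) = (1, 2, 2, 4) ∈ ℝ⁴, and let D = (1/4)·I₄. Then for every θ ∈ ℝ, (ΦᵀDΦ)⁻¹ΦᵀD H(Φθ) = 1 + (9γ/10)θ + (3γ/10)|θ|; consequently, θ satisfies the projected Bellman fixed-point equation θ = (ΦᵀDΦ)⁻¹ΦᵀD H(Φθ) if and only if θ = 1 + (9γ/10)θ + (3γ/10)θ·(𝟙{θ ≥ 0} − 𝟙{θ < 0}). -/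
/- Example 1 MDP: states `Fin 2`, actions `Fin 2`; action `a` leads to state `a`
with probability 1; rewards `R 0 0 = 1, R 0 1 = 2, R 1 0 = 2, R 1 1 = 4`;
single feature `Φ = (1,2,2,4)`; `D = (1/4)·I₄`. -/
theorem example1_projected_bellman_equation
    (γ : ℝ) (hγ0 : 0 < γ) (hγ1 : γ < 1)
    (P : Fin 2 → Fin 2 → Fin 2 → ℝ)
    (hP : ∀ s a s', P s a s' = if s' = a then 1 else 0)
    (R : Fin 2 → Fin 2 → ℝ)
    (hR : R 0 0 = 1 ∧ R 0 1 = 2 ∧ R 1 0 = 2 ∧ R 1 1 = 4)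
    (φ : Fin 2 → Fin 2 → ℝ)
    (hφ : φ 0 0 = 1 ∧ φ 0 1 = 2 ∧ φ 1 0 = 2 ∧ φ 1 1 = 4)
    (H : (Fin 2 → Fin 2 → ℝ) → (Fin 2 → Fin 2 → ℝ))
    (hH : ∀ Q s a, H Q s a
      = R s a + γ * ∑ s', P s a s' *
          Finset.univ.sup' Finset.univ_nonempty (fun a' => Q s' a'))
    (θ : ℝ) :
    (∑ s, ∑ a, (1/4 : ℝ) * φ s a * φ s a)⁻¹
        * ∑ s, ∑ a, (1/4 : ℝ) * φ s a * H (fun s' a' => φ s' a' * θ) s a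
      = 1 + (9 * γ / 10) * θ + (3 * γ / 10) * |θ| ∧
    (θ = (∑ s, ∑ a, (1/4 : ℝ) * φ s a * φ s a)⁻¹
          * ∑ s, ∑ a, (1/4 : ℝ) * φ s a * H (fun s' a' => φ s' a' * θ) s a
      ↔ θ = 1 + (9 * γ / 10) * θ
              + (3 * γ / 10) * θ * (if 0 ≤ θ then 1 else -1)) := by
  have hsup : ∀ f : Fin 2 → ℝ, Finset.univ.sup' Finset.univ_nonempty f = max (f 0) (f 1) := by
    have h : (Finset.univ : Finset (Fin 2)) = {0, 1} := by decide
    intro f; simp [h]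
  obtain ⟨hR1, hR2, hR3, hR4⟩ := hR
  obtain ⟨hφ1, hφ2, hφ3, hφ4⟩ := hφ
  have key : (∑ s, ∑ a, (1/4 : ℝ) * φ s a * φ s a)⁻¹
        * ∑ s, ∑ a, (1/4 : ℝ) * φ s a * H (fun s' a' => φ s' a' * θ) s a
      = 1 + (9 * γ / 10) * θ + (3 * γ / 10) * |θ| := by
    simp only [Fin.sum_univ_two, hH, hP, hsup, hR1, hR2, hR3, hR4, hφ1, hφ2, hφ3, hφ4]
    norm_num
    rcases le_or_gt 0 θ with h | h
    · rw [abs_of_nonneg h,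
        max_eq_right (by linarith : θ ≤ 2*θ), max_eq_right (by linarith : 2*θ ≤ 4*θ)]
      ring
    · rw [abs_of_neg h,
        max_eq_left (by linarith : 2*θ ≤ θ), max_eq_left (by linarith : 4*θ ≤ 2*θ)]
      ring
  refine ⟨key, ?_⟩
  rw [key]
  rcases le_or_gt 0 θ with h | h
  · rw [if_pos h, abs_of_nonneg h]; constructor <;> intro e <;> linarith
  · rw [if_neg (not_le.2 h), abs_of_neg h]; constructor <;> intro e <;> linarith
end

section
/- Let S and A be finite nonempty sets, let d = |S|·|A|, and let φ : S × A → ℝ^d be a family of feature vectors that is linearly independent (hence a basis of ℝ^d). Let μ : S → ℝ with μ(s) > 0 for all s, and let π : S × A → ℝ with π(a|s) ≥ 0 and Σ_{a∈A} π(a|s) = 1 for all s. Let γ ≥ 0 and suppose the negative-drift condition holds: for every θ ∈ ℝ^d with θ ≠ 0, 2γ² Σ_{s∈S} μ(s)·(max_{a∈A} ⟨φ(s,a), θ⟩)² < Σ_{s∈S} Σ_{a∈A} μ(s)·π(a|s)·⟨φ(s,a), θ⟩². Then γ² < π(a|s)/2 for every state-action pair (s,a), and consequently γ < 1/√(2|A|).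 In particular, the negative-drift condition cannot be satisfied when γ ≥ 1/√(2|A|). -/
theorem negative_drift_condition_infeasible
    {S A : Type*} [Fintype S] [Fintype A] [Nonempty S] [Nonempty A]
    (d : ℕ) (hd : d = Fintype.card S * Fintype.card A)
    (φ : S → A → (Fin d → ℝ))
    (hli : LinearIndependent ℝ (fun p : S × A => φ p.1 p.2))
    (μ : S → ℝ) (hμ : ∀ s, 0 < μ s)
    (π : S → A → ℝ) (hπ0 : ∀ s a, 0 ≤ π s a) (hπ1 : ∀ s, ∑ a, π s a = 1)
    (γ : ℝ) (hγ : 0 ≤ γ)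
    (hdrift : ∀ θ : Fin d → ℝ, θ ≠ 0 →
      2 * γ ^ 2 * ∑ s, μ s *
          (Finset.univ.sup' Finset.univ_nonempty
            (fun a => ∑ i, φ s a i * θ i)) ^ 2
        < ∑ s, ∑ a, μ s * π s a * (∑ i, φ s a i * θ i) ^ 2) :
    (∀ s a, γ ^ 2 < π s a / 2) ∧ γ < 1 / Real.sqrt (2 * Fintype.card A) := by
  classical
  have hcard : Fintype.card (S × A) = Module.finrank ℝ (Fin d → ℝ) := by
    simp [Fintype.card_prod, hd]
  let b : Module.Basis (S × A) ℝ (Fin d → ℝ) :=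
    basisOfLinearIndependentOfCardEqFinrank hli hcard
  have hb : ∀ p : S × A, b p = φ p.1 p.2 := by
    intro p
    simp [b, coe_basisOfLinearIndependentOfCardEqFinrank]
  have key : ∀ s a, γ ^ 2 < π s a / 2 := by
    intro s₀ a₀
    set f : (Fin d → ℝ) →ₗ[ℝ] ℝ := b.coord (s₀, a₀) with hf
    set θ : Fin d → ℝ := fun i => f (Pi.single i 1) with hθ
    have hfv : ∀ v : Fin d → ℝ, ∑ i, v i * θ i = f v := by
      intro v
      have hv : v = ∑ i, v i • (Pi.single i 1 : Fin d → ℝ) := by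
        funext j
        simp [Finset.sum_apply, Pi.single_apply, mul_comm]
      calc ∑ i, v i * θ i = ∑ i, f (v i • (Pi.single i 1 : Fin d → ℝ)) := by
            simp [hθ, smul_eq_mul]
        _ = f (∑ i, v i • (Pi.single i 1 : Fin d → ℝ)) := by rw [map_sum]
        _ = f v := by rw [← hv]
    have hdot : ∀ s a, ∑ i, φ s a i * θ i =
        if (s, a) = (s₀, a₀) then (1 : ℝ) else 0 := by
      intro s a
      rw [hfv, ← hb (s, a)]
      simp only [hf, Module.Basis.coord_apply, Module.Basis.repr_self, Finsupp.single_apply]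
    have hθ0 : θ ≠ 0 := by
      intro h
      have h1 := hdot s₀ a₀
      rw [h] at h1
      simp at h1
    have hM : ∀ s, (Finset.univ.sup' Finset.univ_nonempty
        (fun a => ∑ i, φ s a i * θ i)) = if s = s₀ then (1 : ℝ) else 0 := by
      intro s
      by_cases hs : s = s₀
      · subst hs
        apply le_antisymm
        · apply Finset.sup'_le
          intro a _
          rw [hdot]
          split <;> norm_num
        · have := Finset.le_sup' (fun a => ∑ i, φ s a i * θ i)
            (Finset.mem_univ a₀)
          rw [hdot] at this
          simpa [-Finset.le_sup'_iff] using this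
      · simp only [hs, if_false]
        apply le_antisymm
        · apply Finset.sup'_le
          intro a _
          rw [hdot]
          simp [Prod.ext_iff, hs]
        · have := Finset.le_sup' (fun a => ∑ i, φ s a i * θ i)
            (Finset.mem_univ (Classical.arbitrary A))
          rw [hdot] at this
          simpa [Prod.ext_iff, hs, -Finset.le_sup'_iff] using this
    have hL : ∑ s, μ s * (Finset.univ.sup' Finset.univ_nonempty
        (fun a => ∑ i, φ s a i * θ i)) ^ 2 = μ s₀ := by
      rw [Finset.sum_eq_single s₀]
      · rw [hM]; simp
      · intro s _ hs; rw [hM]; simp [hs]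
      · simp
    have hR : ∑ s, ∑ a, μ s * π s a * (∑ i, φ s a i * θ i) ^ 2
        = μ s₀ * π s₀ a₀ := by
      rw [Finset.sum_eq_single s₀]
      · rw [Finset.sum_eq_single a₀]
        · rw [hdot]; simp
        · intro a _ ha; rw [hdot]; simp [Prod.ext_iff, ha]
        · simp
      · intro s _ hs
        apply Finset.sum_eq_zero
        intro a _
        rw [hdot]
        simp [Prod.ext_iff, hs]
      · simp
    have h := hdrift θ hθ0
    rw [hL, hR] at h
    have hμ0 := hμ s₀
    nlinarith [hμ s₀]
  refine ⟨key, ?_⟩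
  obtain ⟨s⟩ := ‹Nonempty S›
  have hA : (0 : ℝ) < Fintype.card A := by
    exact_mod_cast Fintype.card_pos
  obtain ⟨a, -, ha⟩ : ∃ a ∈ Finset.univ, π s a ≤ 1 / Fintype.card A := by
    apply Finset.exists_le_of_sum_le Finset.univ_nonempty
    rw [hπ1]
    simp [Finset.card_univ]
  have h2 : γ ^ 2 < 1 / (2 * Fintype.card A) := by
    have := key s a
    have : γ ^ 2 < (1 / Fintype.card A) / 2 := lt_of_lt_of_le this (by linarith)
    calc γ ^ 2 < (1 / Fintype.card A) / 2 := this
      _ = 1 / (2 * Fintype.card A) := by ring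
  have : γ < Real.sqrt (1 / (2 * Fintype.card A)) := by
    rw [Real.lt_sqrt hγ]
    exact h2
  calc γ < Real.sqrt (1 / (2 * Fintype.card A)) := this
    _ = 1 / Real.sqrt (2 * Fintype.card A) := by
        rw [one_div, Real.sqrt_inv, one_div]
end

section
/- Let n, d ≥ 1, let Φ be a real n × d matrix with linearly independent columns, let D be a real diagonal n × n matrix with nonnegative diagonal entries summing to 1, and define the seminorm ‖x‖_D = (xᵀDx)^{1/2} on ℝⁿ. Let γ ∈ (0,1) and suppose λ > 0 satisfies λ‖θ‖₂² ≤ ‖Φθ‖_D² for all θ ∈ ℝ^d (in particular ΦᵀDΦ is invertible). Then for every v ∈ ℝⁿ with ‖v‖∞ ≤ 1/(1−γ), the vector θ* = (ΦᵀDΦ)⁻¹ΦᵀD v satisfies ‖θ*‖₂ ≤ 1/(λ^{1/2}(1−γ)). -/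
open Matrix

theorem target_parameter_norm_bound
    {n d : ℕ} (hn : 1 ≤ n) (hd : 1 ≤ d)
    (Φ : Matrix (Fin n) (Fin d) ℝ)
    (hΦ : LinearIndependent ℝ (fun j : Fin d => fun i : Fin n => Φ i j))
    (dv : Fin n → ℝ) (hdv0 : ∀ i, 0 ≤ dv i) (hdv1 : ∑ i, dv i = 1)
    (γ : ℝ) (hγ0 : 0 < γ) (hγ1 : γ < 1)
    (lam : ℝ) (hlam : 0 < lam)
    (hcoer : ∀ θ : Fin d → ℝ,
      lam * ∑ j, θ j ^ 2 ≤ ∑ i, dv i * (Φ.mulVec θ i) ^ 2) :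
    IsUnit (Φᵀ * Matrix.diagonal dv * Φ).det ∧
    ∀ v : Fin n → ℝ, (∀ i, |v i| ≤ 1 / (1 - γ)) →
      Real.sqrt (∑ j, ((Φᵀ * Matrix.diagonal dv * Φ)⁻¹.mulVec
          ((Φᵀ * Matrix.diagonal dv).mulVec v)) j ^ 2)
        ≤ 1 / (Real.sqrt lam * (1 - γ)) := by
  set M := Φᵀ * Matrix.diagonal dv * Φ with hM
  have hγ' : (0:ℝ) < 1 - γ := by linarith
  -- quadratic form identity
  have quad : ∀ x : Fin d → ℝ, x ⬝ᵥ M.mulVec x = ∑ i, dv i * (Φ.mulVec x i) ^ 2 := by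
    intro x
    have h1 : M.mulVec x = Φᵀ.mulVec ((Matrix.diagonal dv).mulVec (Φ.mulVec x)) := by
      rw [hM, Matrix.mulVec_mulVec, Matrix.mulVec_mulVec]
    rw [h1, Matrix.dotProduct_mulVec, Matrix.vecMul_transpose]
    simp only [dotProduct, Matrix.mulVec_diagonal]
    exact Finset.sum_congr rfl fun i _ => by ring
  -- positive definiteness / invertibility
  have hMdet : IsUnit M.det := by
    have hpd : M.PosDef := by
      refine Matrix.posDef_iff_dotProduct_mulVec.mpr ⟨?_, ?_⟩
      · -- Hermitian
        rw [Matrix.IsHermitian, Matrix.conjTranspose_eq_transpose_of_trivial, hM,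
          Matrix.transpose_mul, Matrix.transpose_mul, Matrix.transpose_transpose,
          Matrix.diagonal_transpose, Matrix.mul_assoc]
      · intro x hx
        have hxs : 0 < ∑ j, x j ^ 2 := by
          rcases Function.ne_iff.mp hx with ⟨j, hj⟩
          have hxj : 0 < x j ^ 2 := pow_two_pos_of_ne_zero hj
          calc 0 < x j ^ 2 := hxj
            _ ≤ ∑ j, x j ^ 2 := Finset.single_le_sum (f := fun j => x j ^ 2)
                (fun i _ => sq_nonneg _) (Finset.mem_univ j)
        have := lt_of_lt_of_le (mul_pos hlam hxs) (hcoer x)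
        have hq := quad x
        simp only [RCLike.re_to_real, star_trivial]
        rw [hq]
        exact this
    exact isUnit_iff_ne_zero.mpr (ne_of_gt hpd.det_pos)
  refine ⟨hMdet, ?_⟩
  intro v hv
  set θ := M⁻¹.mulVec ((Φᵀ * Matrix.diagonal dv).mulVec v) with hθ
  set u := Φ.mulVec θ with hu
  have hMθ : M.mulVec θ = (Φᵀ * Matrix.diagonal dv).mulVec v := by
    rw [hθ, Matrix.mulVec_mulVec, Matrix.mul_nonsing_inv _ hMdet, Matrix.one_mulVec]
  -- S = ∑ dv u² equals T = ∑ dv u v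
  have hS : ∑ i, dv i * u i ^ 2 = ∑ i, dv i * (u i * v i) := by
    have h1 : θ ⬝ᵥ M.mulVec θ = ∑ i, dv i * u i ^ 2 := quad θ
    have h2 : θ ⬝ᵥ (Φᵀ * Matrix.diagonal dv).mulVec v = ∑ i, dv i * (u i * v i) := by
      rw [Matrix.dotProduct_mulVec, ← Matrix.vecMul_vecMul, Matrix.vecMul_transpose]
      simp only [dotProduct, Matrix.vecMul_diagonal]
      exact Finset.sum_congr rfl fun i _ => by rw [← hu]; ring
    rw [← h1, hMθ, h2]
  set S := ∑ i, dv i * u i ^ 2 with hSdef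
  have hS0 : 0 ≤ S := Finset.sum_nonneg fun i _ => mul_nonneg (hdv0 i) (sq_nonneg _)
  have hB : ∑ i, dv i * v i ^ 2 ≤ (1 / (1 - γ)) ^ 2 := by
    calc ∑ i, dv i * v i ^ 2 ≤ ∑ i, dv i * (1 / (1 - γ)) ^ 2 := by
          refine Finset.sum_le_sum fun i _ => ?_
          have hvi : v i ^ 2 ≤ (1 / (1 - γ)) ^ 2 := by
            rw [← sq_abs]
            exact pow_le_pow_left₀ (abs_nonneg _) (hv i) 2
          exact mul_le_mul_of_nonneg_left hvi (hdv0 i)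
      _ = (1 / (1 - γ)) ^ 2 := by rw [← Finset.sum_mul, hdv1, one_mul]
  -- Cauchy-Schwarz
  have hCS : (∑ i, dv i * (u i * v i)) ^ 2 ≤ S * ∑ i, dv i * v i ^ 2 := by
    have := Finset.sum_mul_sq_le_sq_mul_sq Finset.univ
      (fun i => Real.sqrt (dv i) * u i) (fun i => Real.sqrt (dv i) * v i)
    have heq : ∀ (w : Fin n → ℝ) i, (Real.sqrt (dv i) * w i) ^ 2 = dv i * w i ^ 2 := by
      intro w i
      rw [mul_pow, Real.sq_sqrt (hdv0 i)]
    calc (∑ i, dv i * (u i * v i)) ^ 2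
        = (∑ i, (Real.sqrt (dv i) * u i) * (Real.sqrt (dv i) * v i)) ^ 2 := by
          congr 1
          refine Finset.sum_congr rfl fun i _ => ?_
          rw [show (Real.sqrt (dv i) * u i) * (Real.sqrt (dv i) * v i)
              = (Real.sqrt (dv i) * Real.sqrt (dv i)) * (u i * v i) by ring,
            Real.mul_self_sqrt (hdv0 i)]
      _ ≤ (∑ i, (Real.sqrt (dv i) * u i) ^ 2) * ∑ i, (Real.sqrt (dv i) * v i) ^ 2 := this
      _ = S * ∑ i, dv i * v i ^ 2 := by
          simp only [heq, hSdef]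
  -- S ≤ (1/(1-γ))²
  have hSle : S ≤ (1 / (1 - γ)) ^ 2 := by
    rcases eq_or_lt_of_le hS0 with h0 | h0
    · rw [← h0]; positivity
    · have : S ^ 2 ≤ S * (1 / (1 - γ)) ^ 2 := by
        calc S ^ 2 = (∑ i, dv i * (u i * v i)) ^ 2 := by rw [← hS]
          _ ≤ S * ∑ i, dv i * v i ^ 2 := hCS
          _ ≤ S * (1 / (1 - γ)) ^ 2 := mul_le_mul_of_nonneg_left hB hS0
      nlinarith
  have hθ2 : ∑ j, θ j ^ 2 ≤ (1 / (1 - γ)) ^ 2 / lam := by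
    have := hcoer θ
    rw [← hu, ← hSdef] at this
    have := this.trans hSle
    calc ∑ j, θ j ^ 2 = lam⁻¹ * (lam * ∑ j, θ j ^ 2) := by
          field_simp
      _ ≤ lam⁻¹ * (1 / (1 - γ)) ^ 2 := by
          exact mul_le_mul_of_nonneg_left this (by positivity)
      _ = (1 / (1 - γ)) ^ 2 / lam := by rw [mul_comm, ← div_eq_mul_inv]
  calc Real.sqrt (∑ j, θ j ^ 2) ≤ Real.sqrt ((1 / (1 - γ)) ^ 2 / lam) :=
        Real.sqrt_le_sqrt hθ2
    _ = 1 / (Real.sqrt lam * (1 - γ)) := by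
        rw [Real.sqrt_div (by positivity), Real.sqrt_sq (by positivity), div_div,
          mul_comm]
end

section
/- Let n ≥ 1, let γ ∈ (0,1), let H : ℝⁿ → ℝⁿ be a γ-contraction with respect to the sup norm with fixed point Q* (H(Q*) = Q*), let r > 0, let G : ℝⁿ → ℝⁿ, and let ε ≥ 0 be such that ‖G(Q) − H(Q)‖∞ ≤ ε for every Q with ‖Q‖∞ ≤ r. Let (Q̂_t)_{t≥0} be any sequence in ℝⁿ with ‖Q̂_t‖∞ ≤ r for all t. Then for every T ≥ 0: ‖Q̂_T − Q*‖∞ ≤ γ^T‖Q̂₀ − Q*‖∞ + Σ_{i=0}^{T−1} γ^{T−i−1}·‖Q̂_{i+1} − G(Q̂_i)‖∞ + ε/(1−γ). -/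
/-- The sup norm of a vector in `ℝⁿ`, `n ≥ 1`. -/
noncomputable def supNorm {n : ℕ} [NeZero n] (x : Fin n → ℝ) : ℝ :=
  Finset.univ.sup' Finset.univ_nonempty (fun i => |x i|)

lemma supNorm_nonneg {n : ℕ} [NeZero n] (x : Fin n → ℝ) : 0 ≤ supNorm x := by
  obtain ⟨i, -⟩ := Finset.univ_nonempty (α := Fin n)
  unfold supNorm
  exact le_trans (abs_nonneg (x i)) (Finset.le_sup' (fun j => |x j|) (Finset.mem_univ i))

lemma supNorm_add_le {n : ℕ} [NeZero n] (x y : Fin n → ℝ) :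
    supNorm (x + y) ≤ supNorm x + supNorm y := by
  unfold supNorm
  apply Finset.sup'_le
  intro i _
  calc |(x + y) i| = |x i + y i| := rfl
    _ ≤ |x i| + |y i| := abs_add_le _ _
    _ ≤ supNorm x + supNorm y :=
      add_le_add (Finset.le_sup' (fun j => |x j|) (Finset.mem_univ i)) (Finset.le_sup' (fun j => |y j|) (Finset.mem_univ i))

theorem outer_loop_error_decomposition
    {n : ℕ} (hn : 1 ≤ n) [NeZero n]
    (γ : ℝ) (hγ0 : 0 < γ) (hγ1 : γ < 1)
    (H : (Fin n → ℝ) → (Fin n → ℝ))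
    (hH : ∀ x y, supNorm (H x - H y) ≤ γ * supNorm (x - y))
    (Qstar : Fin n → ℝ) (hQstar : H Qstar = Qstar)
    (r : ℝ) (hr : 0 < r)
    (G : (Fin n → ℝ) → (Fin n → ℝ))
    (ε : ℝ) (hε0 : 0 ≤ ε)
    (hGH : ∀ Q : Fin n → ℝ, supNorm Q ≤ r → supNorm (G Q - H Q) ≤ ε)
    (Qhat : ℕ → (Fin n → ℝ)) (hQhat : ∀ t, supNorm (Qhat t) ≤ r) :
    ∀ T : ℕ, supNorm (Qhat T - Qstar)
      ≤ γ ^ T * supNorm (Qhat 0 - Qstar)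
        + (∑ i ∈ Finset.range T, γ ^ (T - i - 1) * supNorm (Qhat (i + 1) - G (Qhat i)))
        + ε / (1 - γ) := by
  have hγ1' : 0 < 1 - γ := by linarith
  have hεγ : 0 ≤ ε / (1 - γ) := div_nonneg hε0 hγ1'.le
  intro T
  induction T with
  | zero =>
    simp
    nlinarith [supNorm_nonneg (Qhat 0 - Qstar)]
  | succ T ih =>
    have step : supNorm (Qhat (T + 1) - Qstar)
        ≤ supNorm (Qhat (T + 1) - G (Qhat T)) + ε + γ * supNorm (Qhat T - Qstar) := by
      have h1 : Qhat (T + 1) - Qstar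
          = (Qhat (T + 1) - G (Qhat T)) + ((G (Qhat T) - H (Qhat T)) + (H (Qhat T) - H Qstar)) := by
        rw [hQstar]; ring
      calc supNorm (Qhat (T + 1) - Qstar)
          ≤ supNorm (Qhat (T + 1) - G (Qhat T))
            + supNorm ((G (Qhat T) - H (Qhat T)) + (H (Qhat T) - H Qstar)) := by
            rw [h1]; exact supNorm_add_le _ _
        _ ≤ supNorm (Qhat (T + 1) - G (Qhat T))
            + (supNorm (G (Qhat T) - H (Qhat T)) + supNorm (H (Qhat T) - H Qstar)) := by
            gcongr; exact supNorm_add_le _ _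
        _ ≤ supNorm (Qhat (T + 1) - G (Qhat T)) + (ε + γ * supNorm (Qhat T - Qstar)) :=
            by gcongr; exacts [hGH _ (hQhat T), hH _ _]
        _ = _ := by ring
    have hsum : (∑ i ∈ Finset.range (T + 1), γ ^ (T + 1 - i - 1) * supNorm (Qhat (i + 1) - G (Qhat i)))
        = supNorm (Qhat (T + 1) - G (Qhat T))
          + γ * ∑ i ∈ Finset.range T, γ ^ (T - i - 1) * supNorm (Qhat (i + 1) - G (Qhat i)) := by
      rw [Finset.sum_range_succ, Finset.mul_sum]
      have : T + 1 - T - 1 = 0 := by omega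
      rw [this, pow_zero, one_mul, add_comm]
      congr 1
      apply Finset.sum_congr rfl
      intro i hi
      rw [Finset.mem_range] at hi
      have h2 : T + 1 - i - 1 = (T - i - 1) + 1 := by omega
      rw [h2, pow_succ]
      ring
    rw [hsum]
    have hγε : γ * (ε / (1 - γ)) + ε = ε / (1 - γ) := by
      field_simp; ring
    calc supNorm (Qhat (T + 1) - Qstar)
        ≤ supNorm (Qhat (T + 1) - G (Qhat T)) + ε + γ * supNorm (Qhat T - Qstar) := step
      _ ≤ supNorm (Qhat (T + 1) - G (Qhat T)) + ε
          + γ * (γ ^ T * supNorm (Qhat 0 - Qstar)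
            + (∑ i ∈ Finset.range T, γ ^ (T - i - 1) * supNorm (Qhat (i + 1) - G (Qhat i)))
            + ε / (1 - γ)) := by gcongr
      _ = γ ^ (T + 1) * supNorm (Qhat 0 - Qstar)
          + (supNorm (Qhat (T + 1) - G (Qhat T))
            + γ * ∑ i ∈ Finset.range T, γ ^ (T - i - 1) * supNorm (Qhat (i + 1) - G (Qhat i)))
          + (γ * (ε / (1 - γ)) + ε) := by ring
      _ = _ := by rw [hγε]
end
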